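/- arXiv:2308.01156 — 3 statements merged into one kernel-verified Lean document; each statement's English description precedes it below -/
import Mathlib

section
/- Under Assumption hΔ₀ ⊆ V(h) for all h ∈ (0,ρ] with Δ₀ ⊆ [−1,1]^d open nonempty: for each m ∈ ℕ there exists λ⋆(m) > 0 such that for all h ∈ (0,ρ], the smallest eigenvalue λ_γ of the Gram matrix B_γ = ∫_{V(h)} Φ_γ(u)Φ_γ(u)ᵀ h^{−d} du satisfies λ_γ ≥ λ⋆(m), where Φ_γ(u) = (φ_α(u/h))_{|α| ≤ m}. -/
open MeasureTheory Matrix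
open scoped Pointwise

/-! Expanding the quadratic form, `v ⬝ᵥ B v = ∫_{V(h)} (∑_α v_α (u/h)^α)² h^{-d} du`. Shrinking
`V(h)` to `hΔ₀` and substituting `u = h w` bounds this below by `v ⬝ᵥ G v`, where `G` is the Gram
matrix of the monomials over `Δ₀`, which does not depend on `h`. Since a polynomial vanishing on a
nonempty open set is zero, `G` is positive definite, so its quadratic form has a positive minimum on
the compact unit sphere. -/

theorem dotProduct_mulVec_weightedGram {X ι : Type*} [MeasurableSpace X] [Fintype ι]
    {μ : Measure X} (f : ι → X → ℝ) (w : X → ℝ)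
    (hf : ∀ i j, Integrable (fun x => f i x * f j x * w x) μ) (v : ι → ℝ) :
    v ⬝ᵥ (of fun i j => ∫ x, f i x * f j x * w x ∂μ) *ᵥ v
      = ∫ x, (∑ i, v i * f i x) ^ 2 * w x ∂μ := by
  have hterm : ∀ i j, Integrable (fun x => v i * (f i x * f j x * w x * v j)) μ :=
    fun i j => ((hf i j).mul_const (v j)).const_mul (v i)
  calc v ⬝ᵥ (of fun i j => ∫ x, f i x * f j x * w x ∂μ) *ᵥ v
      = ∑ i, ∑ j, ∫ x, v i * (f i x * f j x * w x * v j) ∂μ := by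
        simp only [dotProduct, mulVec, of_apply, Finset.mul_sum, integral_const_mul,
          integral_mul_const]
    _ = ∫ x, ∑ i, ∑ j, v i * (f i x * f j x * w x * v j) ∂μ := by
        rw [integral_finsetSum _ fun i _ => integrable_finsetSum _ fun j _ => hterm i j]
        simp only [integral_finsetSum _ fun j _ => hterm _ j]
    _ = ∫ x, (∑ i, v i * f i x) ^ 2 * w x ∂μ := by
        congr 1 with x
        rw [sq, Finset.sum_mul_sum, Finset.sum_mul]
        exact Finset.sum_congr rfl fun i _ => by
          rw [Finset.sum_mul]
          exact Finset.sum_congr rfl fun j _ => by ring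

theorem MvPolynomial.eq_zero_of_isOpen_of_eval_eq_zero {σ 𝕜 : Type*} [Fintype σ] [RCLike 𝕜]
    {p : MvPolynomial σ 𝕜} {U : Set (σ → 𝕜)} (hU : IsOpen U) (hne : U.Nonempty)
    (hp : ∀ x ∈ U, eval x p = 0) :
    p = 0 := by
  obtain ⟨x₀, hx₀⟩ := hne
  have hzero : Set.EqOn (eval · p) 0 Set.univ :=
    (AnalyticOnNhd.eval_mvPolynomial p).eqOn_zero_of_preconnected_of_eventuallyEq_zero
      isPreconnected_univ (Set.mem_univ x₀) (Filter.eventually_of_mem (hU.mem_nhds hx₀) hp)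
  exact MvPolynomial.funext fun x => by simpa using hzero (Set.mem_univ x)

theorem eq_zero_of_isOpen_of_sum_mul_prod_pow_eq_zero {σ ι : Type*} [Fintype σ] [Fintype ι]
    {e : ι → σ → ℕ} (he : Function.Injective e) {U : Set (σ → ℝ)} (hU : IsOpen U)
    (hne : U.Nonempty) {v : ι → ℝ} (hv : ∀ x ∈ U, ∑ i, v i * ∏ k, x k ^ e i k = 0) :
    v = 0 := by
  classical
  let E : ι → σ →₀ ℕ := fun i => Finsupp.equivFunOnFinite.symm (e i)
  have hE : Function.Injective E := Finsupp.equivFunOnFinite.symm.injective.comp he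
  set p : MvPolynomial σ ℝ := ∑ i, MvPolynomial.monomial (E i) (v i)
  have hp : p = 0 := by
    refine MvPolynomial.eq_zero_of_isOpen_of_eval_eq_zero hU hne fun x hx => ?_
    simpa [p, E, MvPolynomial.eval_monomial, Finsupp.prod_fintype] using hv x hx
  funext i
  simpa [p, MvPolynomial.coeff_sum, MvPolynomial.coeff_monomial, hE.eq_iff] using
    congrArg (MvPolynomial.coeff (E i)) hp

theorem eqOn_zero_of_setIntegral_sq_eq_zero {X : Type*} [TopologicalSpace X]
    [MeasurableSpace X] {μ : Measure X} [μ.IsOpenPosMeasure] {U : Set X} (hU : IsOpen U)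
    {g : X → ℝ} (hg : ContinuousOn g U) (hint : IntegrableOn (fun x => g x ^ 2) U μ)
    (h0 : ∫ x in U, g x ^ 2 ∂μ = 0) : Set.EqOn g 0 U := by
  have hae : (fun x => g x ^ 2) =ᵐ[μ.restrict U] 0 :=
    (integral_eq_zero_iff_of_nonneg (fun x => sq_nonneg (g x)) hint).1 h0
  intro x hx
  simpa using Measure.eqOn_open_of_ae_eq hae hU (hg.pow 2) continuousOn_const hx

theorem isCompact_setOf_dotProduct_self_eq_one {ι : Type*} [Fintype ι] :
    IsCompact {v : ι → ℝ | v ⬝ᵥ v = 1} := by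
  refine Metric.isCompact_of_isClosed_isBounded
    (isClosed_eq (continuous_id.dotProduct continuous_id) continuous_const)
    ((Metric.isBounded_closedBall (x := 0) (r := 1)).subset fun v hv => ?_)
  rw [mem_closedBall_zero_iff, pi_norm_le_iff_of_nonneg zero_le_one]
  intro i
  rw [Real.norm_eq_abs, ← sq_le_one_iff_abs_le_one, sq]
  exact hv ▸ Finset.single_le_sum (fun j _ => mul_self_nonneg (v j)) (Finset.mem_univ i)

theorem Matrix.exists_pos_forall_dotProduct_self_eq_one_le {ι : Type*} [Fintype ι]
    {A : Matrix ι ι ℝ} (hA : ∀ v ≠ 0, 0 < v ⬝ᵥ A *ᵥ v) :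
    ∃ c, 0 < c ∧ ∀ v, v ⬝ᵥ v = 1 → c ≤ v ⬝ᵥ A *ᵥ v := by
  rcases Set.eq_empty_or_nonempty {v : ι → ℝ | v ⬝ᵥ v = 1} with hS | hS
  · exact ⟨1, one_pos, fun v hv => absurd hv (Set.eq_empty_iff_forall_notMem.1 hS v)⟩
  obtain ⟨v₀, hv₀, hmin⟩ := isCompact_setOf_dotProduct_self_eq_one.exists_isMinOn hS
    (continuous_id.dotProduct (continuous_const.matrix_mulVec continuous_id)).continuousOn
  refine ⟨v₀ ⬝ᵥ A *ᵥ v₀, hA v₀ fun h => ?_, fun v hv => hmin hv⟩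
  simp [h] at hv₀

theorem setIntegral_smul_set_comp_inv_smul {E : Type*} [NormedAddCommGroup E]
    [NormedSpace ℝ E] [MeasurableSpace E] [BorelSpace E] [FiniteDimensional ℝ E]
    (μ : Measure E) [μ.IsAddHaarMeasure] (f : E → ℝ) (s : Set E) {r : ℝ} (hr : 0 < r) :
    ∫ x in r • s, f (r⁻¹ • x) * (r ^ Module.finrank ℝ E)⁻¹ ∂μ = ∫ x in s, f x ∂μ := by
  rw [integral_mul_const, mul_comm, ← smul_eq_mul,
    ← Measure.setIntegral_comp_smul_of_pos μ (fun x => f (r⁻¹ • x)) s hr]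
  simp only [inv_smul_smul₀ hr.ne']

theorem Continuous.integrableOn_of_isBounded {X E : Type*} [MetricSpace X]
    [ProperSpace X] [MeasurableSpace X] [OpensMeasurableSpace X] {μ : Measure X}
    [IsFiniteMeasureOnCompacts μ] [NormedAddCommGroup E] {f : X → E} (hf : Continuous f)
    {s : Set X} (hs : Bornology.IsBounded s) : IntegrableOn f s μ :=
  (hf.continuousOn.integrableOn_compact hs.isCompact_closure).mono_set subset_closure

noncomputable def monomialGram {σ ι : Type*} [Fintype σ] (e : ι → σ → ℕ) (U : Set (σ → ℝ)) :
    Matrix ι ι ℝ :=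
  of fun i j => ∫ x in U, (∏ k, x k ^ e i k) * ∏ k, x k ^ e j k

section monomialGram

variable {σ ι : Type*} [Fintype σ] [Fintype ι] {e : ι → σ → ℕ} {U : Set (σ → ℝ)}

theorem dotProduct_mulVec_monomialGram (hU : Bornology.IsBounded U) (v : ι → ℝ) :
    v ⬝ᵥ monomialGram e U *ᵥ v = ∫ x in U, (∑ i, v i * ∏ k, x k ^ e i k) ^ 2 := by
  simpa [monomialGram] using dotProduct_mulVec_weightedGram (μ := volume.restrict U)
    (fun i x => ∏ k, x k ^ e i k) (fun _ => 1)
    (fun i j => Continuous.integrableOn_of_isBounded (by fun_prop) hU) v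

theorem dotProduct_mulVec_monomialGram_pos (he : Function.Injective e) (hU : IsOpen U)
    (hne : U.Nonempty) (hbdd : Bornology.IsBounded U) {v : ι → ℝ} (hv : v ≠ 0) :
    0 < v ⬝ᵥ monomialGram e U *ᵥ v := by
  rw [dotProduct_mulVec_monomialGram hbdd]
  refine (integral_nonneg fun x => sq_nonneg _).lt_of_ne fun h0 => hv ?_
  have hcont : Continuous fun x : σ → ℝ => ∑ i, v i * ∏ k, x k ^ e i k := by fun_prop
  exact eq_zero_of_isOpen_of_sum_mul_prod_pow_eq_zero he hU hne
    (eqOn_zero_of_setIntegral_sq_eq_zero hU hcont.continuousOn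
      ((hcont.pow 2).integrableOn_of_isBounded hbdd) h0.symm)

end monomialGram

theorem gram_min_eigenvalue_lower_bound_general (d : ℕ) (Dom : Set (Fin d → ℝ))
    (t : Fin d → ℝ)
    (ρ : ℝ)
    (Δ₀ : Set (Fin d → ℝ)) (hΔ₀open : IsOpen Δ₀) (hΔ₀ne : Δ₀.Nonempty)
    (hΔ₀sub : Δ₀ ⊆ {u : Fin d → ℝ | ‖u‖ ≤ 1})
    (hass : ∀ h : ℝ, 0 < h → h ≤ ρ →
      (fun u : Fin d → ℝ => h • u) '' Δ₀ ⊆ {u : Fin d → ℝ | t + u ∈ Dom ∧ ‖u‖ ≤ h})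
    (m : ℕ) [Fintype {α : Fin d → ℕ // ∑ j, α j ≤ m}] :
    ∃ lamStar : ℝ, 0 < lamStar ∧
      ∀ h : ℝ, 0 < h → h ≤ ρ →
        ∀ v : {α : Fin d → ℕ // ∑ j, α j ≤ m} → ℝ, v ⬝ᵥ v = 1 →
          lamStar ≤ v ⬝ᵥ Matrix.mulVec
            (Matrix.of fun α β : {α : Fin d → ℕ // ∑ j, α j ≤ m} =>
              ∫ u in {u : Fin d → ℝ | t + u ∈ Dom ∧ ‖u‖ ≤ h},
                (∏ j, (u j / h) ^ α.1 j) * (∏ j, (u j / h) ^ β.1 j) * (h ^ d)⁻¹) v := by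
  have hΔ₀bdd : Bornology.IsBounded Δ₀ :=
    (Metric.isBounded_closedBall (x := 0) (r := 1)).subset fun u hu =>
      mem_closedBall_zero_iff.2 (hΔ₀sub hu)
  obtain ⟨c, hc, hcle⟩ := exists_pos_forall_dotProduct_self_eq_one_le
    (A := monomialGram (Subtype.val : {α : Fin d → ℕ // ∑ j, α j ≤ m} → Fin d → ℕ) Δ₀)
    fun v hv => dotProduct_mulVec_monomialGram_pos Subtype.val_injective hΔ₀open hΔ₀ne
      hΔ₀bdd hv
  refine ⟨c, hc, fun h hh hhρ v hv => (hcle v hv).trans ?_⟩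
  set V := {u : Fin d → ℝ | t + u ∈ Dom ∧ ‖u‖ ≤ h}
  have hVbdd : Bornology.IsBounded V :=
    (Metric.isBounded_closedBall (x := 0) (r := h)).subset fun u hu =>
      mem_closedBall_zero_iff.2 hu.2
  rw [dotProduct_mulVec_weightedGram (μ := volume.restrict V)
      (fun (α : {α : Fin d → ℕ // ∑ j, α j ≤ m}) u => ∏ j, (u j / h) ^ α.1 j)
      (fun _ => (h ^ d)⁻¹)
      (fun α β => Continuous.integrableOn_of_isBounded (by fun_prop) hVbdd),
    dotProduct_mulVec_monomialGram hΔ₀bdd,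
    ← setIntegral_smul_set_comp_inv_smul volume _ Δ₀ hh, Module.finrank_fin_fun]
  simp only [Pi.smul_apply, smul_eq_mul, inv_mul_eq_div]
  exact setIntegral_mono_set (Continuous.integrableOn_of_isBounded (by fun_prop) hVbdd)
    (Filter.Eventually.of_forall fun u => by positivity) (hass h hh hhρ).eventuallyLE

/-- under the simple-domain assumption `hΔ₀ ⊆ V(h)` for `0 < h ≤ ρ`
(with `Δ₀ ⊆ [−1,1]^d` open and nonempty), for each degree `m` there exists
`λ⋆(m) > 0` such that for all `0 < h ≤ ρ` the smallest eigenvalue (expressed via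
the Rayleigh quotient over unit vectors) of the Gram matrix
`B_γ = ∫_{V(h)} Φ_γ(u)Φ_γ(u)ᵀ h^{−d} du`, `Φ_γ(u) = (φ_α(u/h))_{|α|≤m}`,
is at least `λ⋆(m)`. -/
theorem gram_min_eigenvalue_lower_bound (d : ℕ) (Dom : Set (Fin d → ℝ))
    (hDom : IsClosed Dom) (t : Fin d → ℝ)
    (ρ : ℝ) (hρ0 : 0 < ρ) (hρe : ρ ≤ Real.exp (-1))
    (Δ₀ : Set (Fin d → ℝ)) (hΔ₀open : IsOpen Δ₀) (hΔ₀ne : Δ₀.Nonempty)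
    (hΔ₀sub : Δ₀ ⊆ {u : Fin d → ℝ | ‖u‖ ≤ 1})
    (hass : ∀ h : ℝ, 0 < h → h ≤ ρ →
      (fun u : Fin d → ℝ => h • u) '' Δ₀ ⊆ {u : Fin d → ℝ | t + u ∈ Dom ∧ ‖u‖ ≤ h})
    (m : ℕ) [Fintype {α : Fin d → ℕ // ∑ j, α j ≤ m}] :
    ∃ lamStar : ℝ, 0 < lamStar ∧
      ∀ h : ℝ, 0 < h → h ≤ ρ →
        ∀ v : {α : Fin d → ℕ // ∑ j, α j ≤ m} → ℝ, v ⬝ᵥ v = 1 →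
          lamStar ≤ v ⬝ᵥ Matrix.mulVec
            (Matrix.of fun α β : {α : Fin d → ℕ // ∑ j, α j ≤ m} =>
              ∫ u in {u : Fin d → ℝ | t + u ∈ Dom ∧ ‖u‖ ≤ h},
                (∏ j, (u j / h) ^ α.1 j) * (∏ j, (u j / h) ^ β.1 j) * (h ^ d)⁻¹) v :=
  gram_min_eigenvalue_lower_bound_general d Dom t ρ Δ₀ hΔ₀open hΔ₀ne hΔ₀sub hass m
end

section
/- For the polynomial sector D_k with k > 1, fix m ∈ ℕ and let B_γ(h) denote the Gram matrix with entries c_k(α,β) h^{(k−1)(α₂+β₂+1)} over multi-indices |α|,|β| ≤ m (with c_k(α,β) = [(α₂+β₂+1)(α₁+β₁+k(α₂+β₂+1)+1)]^{−1}). Then there exists Ψ⋆ > 0 (depending on k and m but not on h) such that the smallest eigenvalue of B_γ(h) satisfies λ_γ(h) ≥ Ψ⋆ h^{(k−1)(2m+1)} for all h ∈ (0,1]. -/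
/-!
Substituting `y = x^k t` in `∫∫_{0<x<1, 0<y<x^k} x^{α₁+β₁} y^{α₂+β₂} dy dx` gives `c_k(α, β)`:
the `h`-free matrix `C = (c_k(α, β))` (`sectorGram`) is the Gram matrix of the monomials
`x^{α₁} y^{α₂}` on the sector, and `vᵀ C v = ∫₀¹ x^k ∫₀¹ q_x(t)² dt dx` with
`q_x(t) = ∑ v_α x^{α₁} (x^k t)^{α₂}` (`sectorSlice k v x`). If `v ≠ 0`, some coefficient of
`∑ v_α x^{α₁} y^{α₂}` as a polynomial in `y` is a nonzero polynomial in `x`, so `q_x ≠ 0` for all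
but finitely many `x` and `C` is positive definite; by compactness of the unit sphere
`vᵀ C v ≥ Ψ |v|²`. Finally `B_γ(h) = D C D` with `D = diag(h^{(k-1)(α₂+1/2)})`, and `h ≤ 1`,
`α₂ ≤ m` give `|D v|² ≥ h^{(k-1)(2m+1)} |v|²`.
-/

open Matrix Polynomial Set MeasureTheory intervalIntegral

theorem intervalIntegral_pos_of_pos_off_countable {f : ℝ → ℝ} {a b : ℝ} {S : Set ℝ}
    (hab : a < b) (hS : S.Countable) (hf : IntervalIntegrable f volume a b)
    (hpos : ∀ x ∈ Ioc a b, x ∉ S → 0 < f x) : 0 < ∫ x in a..b, f x := by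
  have hS0 : volume S = 0 := hS.measure_zero volume
  have hnonneg : 0 ≤ᵐ[volume.restrict (uIoc a b)] f := by
    rw [uIoc_of_le hab.le]
    filter_upwards [ae_restrict_mem measurableSet_Ioc,
      ae_restrict_of_ae (measure_eq_zero_iff_ae_notMem.mp hS0)] with x hx hxS
    exact (hpos x hx hxS).le
  rw [intervalIntegral.integral_pos_iff_support_of_nonneg_ae' hnonneg hf]
  refine ⟨hab, ?_⟩
  calc 0 < volume (Ioc a b) := by simp [hab]
    _ = volume (Ioc a b \ S) := (measure_sdiff_null hS0).symm
    _ ≤ volume (Function.support f ∩ Ioc a b) :=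
      measure_mono fun x hx => ⟨(hpos x hx.1 hx.2).ne', hx.1⟩

theorem Polynomial.intervalIntegral_eval_sq_pos {p : ℝ[X]} (hp : p ≠ 0) {a b : ℝ} (hab : a < b) :
    0 < ∫ x in a..b, p.eval x ^ 2 :=
  intervalIntegral_pos_of_pos_off_countable hab (finite_setOfPred_isRoot hp).countable
    ((p.continuous.pow 2).intervalIntegrable a b) fun _ _ hx => sq_pos_of_ne_zero hx

section RpowSum

variable {ι : Type*} [Fintype ι] (c e : ι → ℝ)

theorem intervalIntegrable_sum_mul_rpow (he : ∀ i, -1 < e i) (a b : ℝ) :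
    IntervalIntegrable (fun x => ∑ i, c i * x ^ e i) volume a b := by
  have := IntervalIntegrable.sum Finset.univ
    fun i _ => (intervalIntegrable_rpow' (a := a) (b := b) (he i)).const_mul (c i)
  simpa only [Finset.sum_fn] using this

theorem integral_sum_mul_rpow (he : ∀ i, -1 < e i) :
    ∫ x in (0:ℝ)..1, ∑ i, c i * x ^ e i = ∑ i, c i / (e i + 1) := by
  rw [integral_finsetSum fun i _ =>
    (intervalIntegrable_rpow' (he i)).const_mul (c i)]
  refine Finset.sum_congr rfl fun i _ => ?_
  have he1 : e i + 1 ≠ 0 := by linarith [he i]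
  rw [intervalIntegral.integral_const_mul, integral_rpow (Or.inl (he i)), Real.one_rpow,
    Real.zero_rpow he1, sub_zero, mul_one_div]

end RpowSum

theorem integral_sq_sum_mul_pow {ι : Type*} [Fintype ι] (a : ι → ℝ) (n : ι → ℕ) :
    ∫ t in (0:ℝ)..1, (∑ i, a i * t ^ n i) ^ 2 =
      ∑ q : ι × ι, a q.1 * a q.2 / ((n q.1 : ℝ) + n q.2 + 1) := by
  have hexpand : ∀ t : ℝ, (∑ i, a i * t ^ n i) ^ 2 =
      ∑ q : ι × ι, a q.1 * a q.2 * t ^ ((n q.1 : ℝ) + n q.2) := by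
    intro t
    rw [sq, Fintype.sum_mul_sum, Fintype.sum_prod_type]
    refine Finset.sum_congr rfl fun i _ => Finset.sum_congr rfl fun j _ => ?_
    rw [← Nat.cast_add, Real.rpow_natCast, pow_add]
    ring
  simp_rw [hexpand]
  exact integral_sum_mul_rpow _ _ fun _ => neg_one_lt_zero.trans_le (by positivity)

theorem Matrix.PosDef.exists_pos_mul_dotProduct_self_le {ι : Type*} [Fintype ι]
    {A : Matrix ι ι ℝ} (hA : A.PosDef) :
    ∃ c, 0 < c ∧ ∀ v : ι → ℝ, c * (v ⬝ᵥ v) ≤ v ⬝ᵥ (A *ᵥ v) := by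
  cases isEmpty_or_nonempty ι
  · exact ⟨1, one_pos, fun v => by simp [dotProduct]⟩
  have hself_pos : ∀ v : ι → ℝ, v ≠ 0 → 0 < v ⬝ᵥ v := fun v hv =>
    (by simpa using dotProduct_star_self_nonneg v : 0 ≤ v ⬝ᵥ v).lt_of_ne'
      (dotProduct_self_eq_zero.not.mpr hv)
  have hsphere : ∀ v ∈ Metric.sphere (0 : ι → ℝ) 1, v ≠ 0 := fun v hv =>
    norm_ne_zero_iff.mp (by simp_all)
  set R : (ι → ℝ) → ℝ := fun v => v ⬝ᵥ (A *ᵥ v) / (v ⬝ᵥ v)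
  have hR_smul : ∀ v : ι → ℝ, ∀ t ≠ (0 : ℝ), R (t • v) = R v := by
    intro v t ht
    simp only [R, mulVec_smul, dotProduct_smul, smul_dotProduct, smul_eq_mul]
    field_simp
  have hcont : ContinuousOn R (Metric.sphere 0 1) :=
    ContinuousOn.div (by fun_prop) (by fun_prop) fun v hv => (hself_pos v (hsphere v hv)).ne'
  obtain ⟨w, hw, hmin⟩ := (isCompact_sphere (0 : ι → ℝ) 1).exists_isMinOn
    (NormedSpace.sphere_nonempty.mpr zero_le_one) hcont
  refine ⟨R w, div_pos (by simpa using hA.dotProduct_mulVec_pos (hsphere w hw))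
    (hself_pos w (hsphere w hw)), fun v => ?_⟩
  rcases eq_or_ne v 0 with rfl | hv
  · simp
  have hle : R w ≤ R v := by
    rw [← hR_smul v ‖v‖⁻¹ (inv_ne_zero (norm_ne_zero_iff.mpr hv))]
    exact hmin (by simpa using norm_smul_inv_norm (𝕜 := ℝ) hv)
  calc R w * (v ⬝ᵥ v) ≤ R v * (v ⬝ᵥ v) := by gcongr; exact (hself_pos v hv).le
    _ = v ⬝ᵥ (A *ᵥ v) := div_mul_cancel₀ _ (hself_pos v hv).ne'

theorem Matrix.dotProduct_diagonal_mul_mul_diagonal_mulVec {ι R : Type*} [Fintype ι]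
    [DecidableEq ι] [CommRing R] (A : Matrix ι ι R) (d v : ι → R) :
    v ⬝ᵥ ((diagonal d * A * diagonal d) *ᵥ v) = (d * v) ⬝ᵥ (A *ᵥ (d * v)) := by
  have hD : ∀ w : ι → R, diagonal d *ᵥ w = d * w := fun w => funext (mulVec_diagonal d w)
  have hD' : v ᵥ* diagonal d = d * v := funext fun i => (vecMul_diagonal v d i).trans (mul_comm _ _)
  rw [← mulVec_mulVec, ← mulVec_mulVec, dotProduct_mulVec, hD, hD']

theorem dotProduct_self_mul_le_of_le_sq {ι : Type*} [Fintype ι] {c : ℝ} {d : ι → ℝ}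
    (hd : ∀ i, c ≤ d i ^ 2) (v : ι → ℝ) : c * (v ⬝ᵥ v) ≤ (d * v) ⬝ᵥ (d * v) := by
  simp only [dotProduct, Finset.mul_sum, Pi.mul_apply]
  exact Finset.sum_le_sum fun i _ => by nlinarith [hd i, mul_self_nonneg (v i)]

noncomputable def sectorGramCoeff (k : ℝ) (α β : ℕ × ℕ) : ℝ :=
  (((α.2 : ℝ) + β.2 + 1) * ((α.1 : ℝ) + β.1 + k * ((α.2 : ℝ) + β.2 + 1) + 1))⁻¹

noncomputable def sectorGram (k : ℝ) (p : ℕ × ℕ → Prop) : Matrix (Subtype p) (Subtype p) ℝ :=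
  of fun α β => sectorGramCoeff k α β

noncomputable def sectorGramScaled (k h : ℝ) (p : ℕ × ℕ → Prop) :
    Matrix (Subtype p) (Subtype p) ℝ :=
  of fun α β => sectorGramCoeff k α β * h ^ ((k - 1) * ((α.1.2 : ℝ) + β.1.2 + 1))

theorem sectorGram_isHermitian (k : ℝ) (p : ℕ × ℕ → Prop) : (sectorGram k p).IsHermitian := by
  ext α β
  simp only [sectorGram, sectorGramCoeff, conjTranspose_apply, of_apply, star_trivial]
  ring_nf

noncomputable def sectorExponent (k : ℝ) (α : ℕ × ℕ) : ℝ := α.1 + k * α.2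

theorem neg_one_lt_add_sectorExponent_add {k : ℝ} (hk : 0 ≤ k) (α β : ℕ × ℕ) :
    -1 < k + sectorExponent k α + sectorExponent k β :=
  neg_one_lt_zero.trans_le (by unfold sectorExponent; positivity)

section

variable {p : ℕ × ℕ → Prop} [Fintype (Subtype p)]

theorem sectorGramScaled_eq {k h : ℝ} (hh : 0 < h) :
    sectorGramScaled k h p =
      diagonal (fun α : Subtype p => h ^ ((k - 1) * ((α.1.2 : ℝ) + 1 / 2))) * sectorGram k p *
        diagonal (fun α : Subtype p => h ^ ((k - 1) * ((α.1.2 : ℝ) + 1 / 2))) := by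
  ext α β
  rw [mul_diagonal, diagonal_mul, sectorGramScaled, sectorGram, of_apply, of_apply,
    mul_right_comm, ← Real.rpow_add hh, mul_comm]
  ring_nf

noncomputable def yCoeff (v : Subtype p → ℝ) (j : ℕ) : ℝ[X] :=
  ∑ α with α.1.2 = j, C (v α) * X ^ α.1.1

theorem coeff_yCoeff (v : Subtype p → ℝ) (α : Subtype p) : (yCoeff v α.1.2).coeff α.1.1 = v α := by
  rw [yCoeff, finsetSum_coeff, Finset.sum_eq_single α]
  · simp
  · intro β hβ hne
    rw [Finset.mem_filter] at hβ
    have : β.1.1 ≠ α.1.1 := fun h => hne (Subtype.ext (Prod.ext h hβ.2))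
    simp [coeff_X_pow, this.symm]
  · simp

theorem exists_yCoeff_ne_zero {v : Subtype p → ℝ} (hv : v ≠ 0) : ∃ j, yCoeff v j ≠ 0 := by
  obtain ⟨α, hα⟩ := Function.ne_iff.mp hv
  exact ⟨α.1.2, fun h => hα (by simpa [h] using (coeff_yCoeff v α).symm)⟩

noncomputable def sectorSlice (k : ℝ) (v : Subtype p → ℝ) (x : ℝ) : ℝ[X] :=
  ∑ α, C (v α * x ^ sectorExponent k α) * X ^ α.1.2

theorem coeff_sectorSlice (k : ℝ) (v : Subtype p → ℝ) {x : ℝ} (hx : 0 < x) (j : ℕ) :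
    (sectorSlice k v x).coeff j = x ^ (k * j) * (yCoeff v j).eval x := by
  simp only [sectorSlice, yCoeff, finsetSum_coeff, coeff_C_mul, coeff_X_pow, eval_finsetSum,
    Finset.mul_sum, Finset.sum_filter]
  refine Finset.sum_congr rfl fun α _ => ?_
  by_cases hj : α.1.2 = j
  · subst hj
    simp only [sectorExponent, if_true, Real.rpow_add hx, Real.rpow_natCast, mul_one, eval_mul,
      eval_C, eval_pow, eval_X]
    ring
  · simp [hj, Ne.symm hj]

theorem sectorSlice_ne_zero (k : ℝ) (v : Subtype p → ℝ) {x : ℝ} (hx : 0 < x) {j : ℕ}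
    (hj : ¬ (yCoeff v j).IsRoot x) : sectorSlice k v x ≠ 0 := by
  intro h
  have := coeff_sectorSlice k v hx j
  rw [h, coeff_zero, eq_comm] at this
  exact hj (by simpa [(Real.rpow_pos_of_pos hx _).ne'] using this)

theorem sectorSlice_integral_eq (k : ℝ) (v : Subtype p → ℝ) {x : ℝ} (hx : 0 < x) :
    x ^ k * ∫ t in (0:ℝ)..1, (sectorSlice k v x).eval t ^ 2 =
      ∑ q : Subtype p × Subtype p, v q.1 * v q.2 / ((q.1.1.2 : ℝ) + q.2.1.2 + 1) *
        x ^ (k + sectorExponent k q.1 + sectorExponent k q.2) := by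
  simp only [sectorSlice, eval_finsetSum, eval_mul, eval_C, eval_pow, eval_X]
  rw [integral_sq_sum_mul_pow, Finset.mul_sum]
  refine Finset.sum_congr rfl fun q _ => ?_
  rw [Real.rpow_add hx, Real.rpow_add hx]
  ring

theorem dotProduct_sectorGram_mulVec {k : ℝ} (hk : 0 ≤ k) (v : Subtype p → ℝ) :
    v ⬝ᵥ (sectorGram k p *ᵥ v) = ∫ x in (0:ℝ)..1, ∑ q : Subtype p × Subtype p,
      v q.1 * v q.2 / ((q.1.1.2 : ℝ) + q.2.1.2 + 1) *
        x ^ (k + sectorExponent k q.1 + sectorExponent k q.2) := by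
  rw [integral_sum_mul_rpow _ (fun q : Subtype p × Subtype p =>
    k + sectorExponent k q.1 + sectorExponent k q.2)
    fun q => neg_one_lt_add_sectorExponent_add hk q.1 q.2]
  simp only [dotProduct, mulVec, sectorGram, of_apply, Finset.mul_sum, Fintype.sum_prod_type]
  refine Finset.sum_congr rfl fun α _ => Finset.sum_congr rfl fun β _ => ?_
  rw [sectorGramCoeff, sectorExponent, sectorExponent, mul_inv]
  ring

theorem sectorGram_posDef {k : ℝ} (hk : 0 ≤ k) : (sectorGram k p).PosDef := by
  refine PosDef.of_dotProduct_mulVec_pos (sectorGram_isHermitian k p) fun v hv => ?_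
  rw [star_trivial, dotProduct_sectorGram_mulVec hk]
  obtain ⟨j, hj⟩ := exists_yCoeff_ne_zero hv
  refine intervalIntegral_pos_of_pos_off_countable one_pos
    (finite_setOfPred_isRoot hj).countable
    (intervalIntegrable_sum_mul_rpow _ _ (fun q : Subtype p × Subtype p =>
      neg_one_lt_add_sectorExponent_add hk q.1 q.2) 0 1)
    fun x hx hroot => ?_
  rw [← sectorSlice_integral_eq k v hx.1]
  exact mul_pos (Real.rpow_pos_of_pos hx.1 k)
    (intervalIntegral_eval_sq_pos (sectorSlice_ne_zero k v hx.1 hroot) one_pos)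

end

/-- for the polynomial sector `D_k`, `k > 1`, and fixed degree `m`, the
Gram matrix with entries `c_k(α,β) h^{(k−1)(α₂+β₂+1)}` over multi-indices of total
degree at most `m` has smallest eigenvalue (via the Rayleigh quotient) at least
`Ψ⋆ h^{(k−1)(2m+1)}` for all `h ∈ (0,1]`, for some `Ψ⋆ > 0` independent of `h`. -/
theorem sector_gram_min_eigenvalue (k : ℝ) (hk : 1 < k) (m : ℕ)
    [Fintype {α : ℕ × ℕ // α.1 + α.2 ≤ m}] :
    ∃ Ψ : ℝ, 0 < Ψ ∧
      ∀ h : ℝ, 0 < h → h ≤ 1 →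
        ∀ v : {α : ℕ × ℕ // α.1 + α.2 ≤ m} → ℝ, v ⬝ᵥ v = 1 →
          Ψ * h ^ ((k - 1) * (2 * (m : ℝ) + 1)) ≤
            v ⬝ᵥ Matrix.mulVec
              (Matrix.of fun α β : {α : ℕ × ℕ // α.1 + α.2 ≤ m} =>
                (((α.1.2 : ℝ) + β.1.2 + 1) *
                    ((α.1.1 : ℝ) + β.1.1 + k * ((α.1.2 : ℝ) + β.1.2 + 1) + 1))⁻¹ *
                  h ^ ((k - 1) * ((α.1.2 : ℝ) + β.1.2 + 1))) v := by
  obtain ⟨Ψ, hΨ, hC⟩ := (sectorGram_posDef (p := fun α : ℕ × ℕ => α.1 + α.2 ≤ m)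
    (by linarith : (0 : ℝ) ≤ k)).exists_pos_mul_dotProduct_self_le
  refine ⟨Ψ, hΨ, fun h h0 h1 v hv => ?_⟩
  set d := fun α : {α : ℕ × ℕ // α.1 + α.2 ≤ m} => h ^ ((k - 1) * ((α.1.2 : ℝ) + 1 / 2))
  have hd : ∀ α, h ^ ((k - 1) * (2 * (m : ℝ) + 1)) ≤ d α ^ 2 := fun α => by
    have hα : (α.1.2 : ℝ) ≤ m := by exact_mod_cast (Nat.le_add_left _ _).trans α.2
    rw [← Real.rpow_natCast, ← Real.rpow_mul h0.le]
    exact Real.rpow_le_rpow_of_exponent_ge h0 h1 (by push_cast; nlinarith)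
  calc Ψ * h ^ ((k - 1) * (2 * (m : ℝ) + 1))
      = Ψ * (h ^ ((k - 1) * (2 * (m : ℝ) + 1)) * (v ⬝ᵥ v)) := by rw [hv, mul_one]
    _ ≤ Ψ * ((d * v) ⬝ᵥ (d * v)) := by gcongr; exact dotProduct_self_mul_le_of_le_sq hd v
    _ ≤ (d * v) ⬝ᵥ (sectorGram k _ *ᵥ (d * v)) := hC _
    _ = v ⬝ᵥ (sectorGramScaled k h _ *ᵥ v) := by
      rw [sectorGramScaled_eq h0, dotProduct_diagonal_mul_mul_diagonal_mulVec]
end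

section
/- Let s, L > 0 and ρ ∈ (0, e^{−1}]. There exists a constant F(s,L) < ∞ such that every probability density f : D → ℝ in the Hölder class Σ(s,L) satisfies sup_{u ∈ V(ρ)} |f(t+u)| ≤ F(s,L). -/
/-!
A nonzero polynomial vanishes only on a null set and `V` has positive measure, so on the
finite-dimensional space of coefficient vectors `q` the linear map `q ↦ P_q ∈ L¹(V)` is injective, hence antilipschitz:
`‖q‖ ≤ K ∫_V |P_q|`. On `V ⊆ [-1,1]^d` the approximation gives `|P_q| ≤ f(t + ·) + L`, so
`∫_V |P_q| ≤ 1 + L vol(V)`; and since the monomials are bounded by `1` there,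
`|f(t + u)| ≤ |P_q(u)| + L ≤ N K (1 + L vol(V)) + L`, with `N` the number of monomials.
-/

open MeasureTheory

namespace MvPolynomial

theorem finite_setOf_eval_cons_eq_zero {R : Type*} [CommRing R] [IsDomain R] {n : ℕ}
    {p : MvPolynomial (Fin (n + 1)) R} {y : Fin n → R}
    (hy : eval y (finSuccEquiv R n p).leadingCoeff ≠ 0) :
    {a : R | eval (Fin.cons a y) p = 0}.Finite := by
  have hne : (finSuccEquiv R n p).map (eval y) ≠ 0 := fun h ↦ hy <| by
    simpa [Polynomial.coeff_map] using congrArg (·.coeff (finSuccEquiv R n p).natDegree) h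
  simpa only [eval_eq_eval_mv_eval', Polynomial.IsRoot] using
    Polynomial.finite_setOfPred_isRoot hne

theorem volume_setOf_eval_eq_zero {d : ℕ} {p : MvPolynomial (Fin d) ℝ} (hp : p ≠ 0) :
    volume {x : Fin d → ℝ | eval x p = 0} = 0 := by
  induction d with
  | zero =>
    obtain ⟨c, rfl⟩ := C_surjective (Fin 0) p
    have hc : c ≠ 0 := by rintro rfl; exact hp C_0
    simp [hc]
  | succ n ih =>
    set W : Set (ℝ × (Fin n → ℝ)) := {w | eval (Fin.cons w.1 w.2) p = 0}
    have hW : MeasurableSet W := (isClosed_singleton.preimage <|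
      (continuous_eval p).comp (continuous_fst.finCons continuous_snd)).measurableSet
    have hlead : (finSuccEquiv ℝ n p).leadingCoeff ≠ 0 := by simpa using hp
    -- Fubini in the first coordinate: off the null zero set of the leading coefficient in `x₀`,
    -- the sections are finite.
    have hsections : ∀ᵐ y, volume ((fun a ↦ (a, y)) ⁻¹' W) = 0 := by
      filter_upwards [measure_eq_zero_iff_ae_notMem.mp (ih hlead)] with y hy
      exact (finite_setOf_eval_cons_eq_zero hy).measure_zero _
    have hsplit : {x : Fin (n + 1) → ℝ | eval x p = 0} =
        MeasurableEquiv.piFinSuccAbove (fun _ ↦ ℝ) 0 ⁻¹' W := by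
      ext x
      simp [W, Fin.cons_self_tail]
    rw [hsplit, (volume_preserving_piFinSuccAbove (fun _ ↦ ℝ) 0).measure_preimage
      hW.nullMeasurableSet, Measure.volume_eq_prod, Measure.prod_apply_symm hW,
      lintegral_congr_ae hsections, lintegral_zero]

theorem eq_zero_of_ae_restrict_eval_eq_zero {d : ℕ} {V : Set (Fin d → ℝ)} (hV : volume V ≠ 0)
    {p : MvPolynomial (Fin d) ℝ} (h : ∀ᵐ x ∂volume.restrict V, eval x p = 0) : p = 0 := by
  by_contra hp
  have hne : ∀ᵐ x ∂volume.restrict V, eval x p ≠ 0 :=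
    ae_restrict_of_ae (measure_eq_zero_iff_ae_notMem.mp (volume_setOf_eval_eq_zero hp))
  have : ae (volume.restrict V) = ⊥ :=
    Filter.eventually_false_iff_eq_bot.mp (by filter_upwards [h, hne] with x h0 hne using hne h0)
  exact hV (Measure.restrict_eq_zero.mp (ae_eq_bot.mp this))

variable {ι σ R : Type*} [Fintype ι]

noncomputable def ofCoeffs [Finite σ] [CommSemiring R] (e : ι → σ → ℕ) :
    (ι → R) →ₗ[R] MvPolynomial σ R :=
  Fintype.linearCombination R fun i ↦ monomial (Finsupp.equivFunOnFinite.symm (e i)) 1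

theorem ofCoeffs_injective [Finite σ] [CommSemiring R] {e : ι → σ → ℕ}
    (he : Function.Injective e) : Function.Injective (ofCoeffs (R := R) e) := by
  have := (basisMonomials σ R).linearIndependent.comp _
    (Finsupp.equivFunOnFinite.symm.injective.comp he)
  rw [coe_basisMonomials] at this
  exact this.fintypeLinearCombination_injective

theorem eval_ofCoeffs [Fintype σ] [CommSemiring R] (e : ι → σ → ℕ) (q : ι → R) (x : σ → R) :
    eval x (ofCoeffs e q) = ∑ i, q i * ∏ j, x j ^ e i j := by
  simp [ofCoeffs, Fintype.linearCombination_apply, eval_monomial, Finsupp.prod_fintype]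

theorem abs_eval_ofCoeffs_le [Fintype σ] (e : ι → σ → ℕ) (q : ι → ℝ) {x : σ → ℝ}
    (hx : ‖x‖ ≤ 1) : |eval x (ofCoeffs e q)| ≤ Fintype.card ι * ‖q‖ := by
  have hmon : ∀ i, |∏ j, x j ^ e i j| ≤ 1 := fun i ↦ by
    simp only [Finset.abs_prod, abs_pow]
    exact Finset.prod_le_one (fun _ _ ↦ by positivity) fun j _ ↦
      pow_le_one₀ (abs_nonneg _) ((norm_le_pi_norm x j).trans hx)
  calc |eval x (ofCoeffs e q)| ≤ ∑ i, ‖q i‖ * |∏ j, x j ^ e i j| := by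
        rw [eval_ofCoeffs]
        exact (Finset.abs_sum_le_sum_abs _ _).trans_eq (by simp only [abs_mul, Real.norm_eq_abs])
    _ ≤ ∑ _i : ι, ‖q‖ := Finset.sum_le_sum fun i _ ↦
        (mul_le_mul (norm_le_pi_norm q i) (hmon i) (abs_nonneg _) (norm_nonneg _)).trans_eq
          (mul_one _)
    _ = Fintype.card ι * ‖q‖ := by simp

theorem integrableOn_eval [Fintype σ] {μ : Measure (σ → ℝ)} [IsLocallyFiniteMeasure μ]
    (p : MvPolynomial σ ℝ) {V : Set (σ → ℝ)} (hVb : Bornology.IsBounded V) :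
    IntegrableOn (fun x ↦ eval x p) V μ :=
  ((continuous_eval p).locallyIntegrable.integrableOn_isCompact hVb.isCompact_closure).mono_set
    subset_closure

theorem exists_norm_le_mul_setIntegral_abs_eval_ofCoeffs {d : ℕ} {e : ι → Fin d → ℕ}
    (he : Function.Injective e) {V : Set (Fin d → ℝ)} (hVb : Bornology.IsBounded V)
    (hV : volume V ≠ 0) :
    ∃ K : NNReal, ∀ q : ι → ℝ, ‖q‖ ≤ K * ∫ x in V, |eval x (ofCoeffs e q)| := by
  have hint (q : ι → ℝ) : Integrable (fun x ↦ eval x (ofCoeffs e q)) (volume.restrict V) :=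
    integrableOn_eval _ hVb
  let T : (ι → ℝ) →ₗ[ℝ] (Fin d → ℝ) →₁[volume.restrict V] ℝ :=
    { toFun q := (hint q).toL1 _
      map_add' q q' := by
        rw [← Integrable.toL1_add _ _ (hint q) (hint q')]
        exact (Integrable.toL1_eq_toL1_iff _ _ _ _).mpr (.of_forall fun x ↦ by simp)
      map_smul' c q := by
        rw [RingHom.id_apply, ← Integrable.toL1_smul _ (hint q)]
        exact (Integrable.toL1_eq_toL1_iff _ _ _ _).mpr (.of_forall fun x ↦ by simp) }
  have hT : Function.Injective T := by
    refine (injective_iff_map_eq_zero T).mpr fun q hq ↦ ofCoeffs_injective he ?_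
    rw [map_zero]
    exact eq_zero_of_ae_restrict_eval_eq_zero hV <|
      (Integrable.toL1_eq_toL1_iff _ _ (hint q) (integrable_zero _ _ _)).mp
        (hq.trans (Integrable.toL1_zero _).symm)
  obtain ⟨K, -, hK⟩ := T.injective_iff_antilipschitz.mp hT
  refine ⟨K, fun q ↦ (ZeroHomClass.bound_of_antilipschitz T hK q).trans_eq ?_⟩
  rw [LinearMap.coe_mk, AddHom.coe_mk, L1.norm_of_fun_eq_integral_norm]
  simp only [Real.norm_eq_abs]

end MvPolynomial

theorem setIntegral_abs_le_setIntegral_add_mul_of_abs_sub_le {α : Type*} [MeasurableSpace α]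
    {μ : Measure α} {f g : α → ℝ} {V : Set α} {L : ℝ} (hVm : MeasurableSet V) (hV : μ V ≠ ⊤)
    (hf : IntegrableOn f V μ) (hg : IntegrableOn g V μ) (hf0 : ∀ x ∈ V, 0 ≤ f x)
    (hfg : ∀ x ∈ V, |f x - g x| ≤ L) :
    ∫ x in V, |g x| ∂μ ≤ (∫ x in V, f x ∂μ) + μ.real V * L := by
  calc ∫ x in V, |g x| ∂μ ≤ ∫ x in V, (f x + L) ∂μ :=
        setIntegral_mono_on hg.abs (hf.add (integrableOn_const hV)) hVm fun x hx ↦ by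
          have := abs_sub_abs_le_abs_sub (g x) (f x)
          rw [abs_sub_comm, abs_of_nonneg (hf0 x hx)] at this
          linarith [hfg x hx]
    _ = (∫ x in V, f x ∂μ) + μ.real V * L := by
        rw [integral_add hf (integrableOn_const hV), setIntegral_const, smul_eq_mul]

theorem setIntegral_comp_add_le_one {G : Type*} [MeasurableSpace G] [AddGroup G] [MeasurableAdd G]
    {μ : Measure G} [μ.IsAddLeftInvariant] {f : G → ℝ} (hf0 : ∀ x, 0 ≤ f x)
    (hf1 : ∫ x, f x ∂μ = 1) (t : G) (V : Set G) :
    ∫ u in V, f (t + u) ∂μ ≤ 1 := by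
  have hf : Integrable f μ := .of_integral_ne_zero (by simp [hf1])
  calc ∫ u in V, f (t + u) ∂μ ≤ ∫ u, f (t + u) ∂μ :=
        setIntegral_le_integral (hf.comp_add_left t) (.of_forall fun _ ↦ hf0 _)
    _ = 1 := by rw [integral_add_left_eq_self f t, hf1]

theorem holder_class_uniformly_bounded_general (d : ℕ) (Dom : Set (Fin d → ℝ))
    (hDom : MeasurableSet Dom) (t : Fin d → ℝ)
    (ρ : ℝ) (hρe : ρ ≤ Real.exp (-1))
    (hV : 0 < volume {u : Fin d → ℝ | t + u ∈ Dom ∧ ‖u‖ ≤ ρ})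
    (s L : ℝ) (hs : 0 < s) (hL : 0 < L)
    (ms : ℕ)
    [Fintype {α : Fin d → ℕ // ∑ j, α j ≤ ms}] :
    ∃ F : ℝ, ∀ f : (Fin d → ℝ) → ℝ,
      Measurable f → (∀ x, 0 ≤ f x) → (∀ x, x ∉ Dom → f x = 0) → (∫ x, f x) = 1 →
      (∃ q : {α : Fin d → ℕ // ∑ j, α j ≤ ms} → ℝ,
        ∀ u : Fin d → ℝ, t + u ∈ Dom → ‖u‖ ≤ ρ →
          |f (t + u) - ∑ α, q α * ∏ j, u j ^ α.1 j| ≤ L * ‖u‖ ^ s) →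
      ∀ u : Fin d → ℝ, t + u ∈ Dom → ‖u‖ ≤ ρ → |f (t + u)| ≤ F := by
  set V := {u : Fin d → ℝ | t + u ∈ Dom ∧ ‖u‖ ≤ ρ}
  have hρ1 : ρ ≤ 1 := hρe.trans (Real.exp_le_one_iff.mpr (by norm_num))
  have hVm : MeasurableSet V := (measurable_const_add t hDom).inter
    (isClosed_le continuous_norm continuous_const).measurableSet
  have hVb : Bornology.IsBounded V :=
    Metric.isBounded_closedBall.subset fun u hu ↦ mem_closedBall_zero_iff.mpr hu.2
  obtain ⟨K, hK⟩ := MvPolynomial.exists_norm_le_mul_setIntegral_abs_eval_ofCoeffs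
    (Subtype.val_injective (p := fun α : Fin d → ℕ ↦ ∑ j, α j ≤ ms)) hVb hV.ne'
  refine ⟨Fintype.card {α : Fin d → ℕ // ∑ j, α j ≤ ms} * (K * (1 + volume.real V * L)) + L, ?_⟩
  rintro f - hf0 - hf1 ⟨q, hq⟩ u hu hu'
  set p := MvPolynomial.ofCoeffs Subtype.val q
  simp only [← MvPolynomial.eval_ofCoeffs] at hq
  have herr (v) (hv : v ∈ V) : |f (t + v) - MvPolynomial.eval v p| ≤ L :=
    (hq v hv.1 hv.2).trans <| mul_le_of_le_one_right hL.le <|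
      Real.rpow_le_one (norm_nonneg v) (hv.2.trans hρ1) hs.le
  have hpV : ∫ v in V, |MvPolynomial.eval v p| ≤ 1 + volume.real V * L := by
    have hf : Integrable f := .of_integral_ne_zero (by simp [hf1])
    refine (setIntegral_abs_le_setIntegral_add_mul_of_abs_sub_le hVm hVb.measure_lt_top.ne
      (hf.comp_add_left t).integrableOn (MvPolynomial.integrableOn_eval p hVb) (fun v _ ↦ hf0 _)
      herr).trans ?_
    linarith [setIntegral_comp_add_le_one hf0 hf1 t V]
  calc |f (t + u)| ≤ |MvPolynomial.eval u p| + L := by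
        linarith [abs_sub_abs_le_abs_sub (f (t + u)) (MvPolynomial.eval u p), herr u ⟨hu, hu'⟩]
    _ ≤ Fintype.card {α : Fin d → ℕ // ∑ j, α j ≤ ms} * ‖q‖ + L := by
        gcongr; exact MvPolynomial.abs_eval_ofCoeffs_le _ q (hu'.trans hρ1)
    _ ≤ _ := by gcongr; exact (hK q).trans (by gcongr)

/-- uniform boundedness of Hölder-class densities. For `s, L > 0` and
`ρ ∈ (0, e^{−1}]`, there exists `F(s,L) < ∞` such that every probability density `f`
supported on `D` admitting on `V(ρ) = (D−t) ∩ ρ[−1,1]^d` a polynomial approximation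
of degree at most `⌊s⌋'` (greatest integer strictly less than `s`) with error
`L‖u‖_∞^s` satisfies `sup_{u ∈ V(ρ)} |f(t+u)| ≤ F(s,L)`. -/
theorem holder_class_uniformly_bounded (d : ℕ) (Dom : Set (Fin d → ℝ))
    (hDom : MeasurableSet Dom) (t : Fin d → ℝ)
    (ρ : ℝ) (hρ0 : 0 < ρ) (hρe : ρ ≤ Real.exp (-1))
    (hV : 0 < volume {u : Fin d → ℝ | t + u ∈ Dom ∧ ‖u‖ ≤ ρ})
    (s L : ℝ) (hs : 0 < s) (hL : 0 < L)
    (ms : ℕ) (hms : (ms : ℝ) < s ∧ s ≤ ms + 1)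
    [Fintype {α : Fin d → ℕ // ∑ j, α j ≤ ms}] :
    ∃ F : ℝ, ∀ f : (Fin d → ℝ) → ℝ,
      Measurable f → (∀ x, 0 ≤ f x) → (∀ x, x ∉ Dom → f x = 0) → (∫ x, f x) = 1 →
      (∃ q : {α : Fin d → ℕ // ∑ j, α j ≤ ms} → ℝ,
        ∀ u : Fin d → ℝ, t + u ∈ Dom → ‖u‖ ≤ ρ →
          |f (t + u) - ∑ α, q α * ∏ j, u j ^ α.1 j| ≤ L * ‖u‖ ^ s) →
      ∀ u : Fin d → ℝ, t + u ∈ Dom → ‖u‖ ≤ ρ → |f (t + u)| ≤ F :=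
  holder_class_uniformly_bounded_general d Dom hDom t ρ hρe hV s L hs hL ms
end
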